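/- arXiv:1510.07104 — 2 statements merged into one kernel-verified Lean document; each statement's English description precedes it below -/
import Mathlib

section
/- In a finite directed acyclic graph, processing vertices in a topological order, the recurrence agg(v) = A(v) + agg(p(v)) + Σ_{w ∈ WD(v)} A(w) correctly computes agg(v) = Σ_{w ∈ W_t(v)} A(w), where p(v) is any fixed in-neighbor of v, WD(v) = W_t(v) \ (W_t(p(v)) ∪ {v}), A is a commutative-monoid-valued vertex attribute, and for source vertices agg(v) = A(v) + Σ_{w ∈ W_t(v)\{v}} A(w). -/
open Finset in
/-- Correctness of the inheritance-index recurrence: if `agg` satisfies the recurrence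
`agg v = A v + agg (p v) + Σ_{w ∈ WD(v)} A w` for non-source vertices (and the base
case for sources), then `agg v = Σ_{w ∈ W_t(v)} A w` for every vertex `v`. -/
theorem inheritance_index_correct {V : Type*} [Fintype V] [DecidableEq V]
    (E : V → V → Prop) [DecidableRel fun a b => Relation.ReflTransGen E a b]
    (hacyc : ∀ v, ¬ Relation.TransGen E v v)
    {M : Type*} [AddCommMonoid M] (A : V → M) (p : V → V) (agg : V → M)
    (hp : ∀ v, (∃ u, E u v) → E (p v) v)
    (hsrc : ∀ v, ¬ (∃ u, E u v) →
      agg v = A v + ∑ w ∈ (univ.filter (fun w => Relation.ReflTransGen E w v)) \ {v}, A w)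
    (hrec : ∀ v, (∃ u, E u v) →
      agg v = A v + agg (p v) +
        ∑ w ∈ (univ.filter (fun w => Relation.ReflTransGen E w v)) \
              ((univ.filter (fun w => Relation.ReflTransGen E w (p v))) ∪ {v}), A w) :
    ∀ v, agg v = ∑ w ∈ univ.filter (fun w => Relation.ReflTransGen E w v), A w := by
  set S : V → Finset V := fun v => univ.filter (fun w => Relation.ReflTransGen E w v) with hS
  have hmemS : ∀ v, v ∈ S v := fun v => by simp [hS, Relation.ReflTransGen.refl]
  have key : ∀ n : ℕ, ∀ v : V, (S v).card ≤ n →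
      agg v = ∑ w ∈ S v, A w := by
    intro n
    induction n with
    | zero =>
      intro v hv
      have h1 : 1 ≤ (S v).card := by
        simpa using card_le_card (singleton_subset_iff.mpr (hmemS v))
      omega
    | succ n ih =>
      intro v hv
      by_cases hsv : ∃ u, E u v
      · have hE : E (p v) v := hp v hsv
        have hsub : S (p v) ⊆ S v := by
          intro w hw
          simp only [hS, mem_filter, mem_univ, true_and] at hw ⊢
          exact hw.trans (Relation.ReflTransGen.single hE)
        have hvnot : v ∉ S (p v) := by
          simp only [hS, mem_filter, mem_univ, true_and]
          intro hcon
          exact hacyc v (Relation.TransGen.tail' hcon hE)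
        have hsubU : S (p v) ∪ {v} ⊆ S v := by
          rw [union_subset_iff]
          exact ⟨hsub, singleton_subset_iff.mpr (hmemS v)⟩
        have hcard : (S (p v)).card ≤ n := by
          have := card_lt_card (ssubset_of_subset_not_subset hsub
            (fun h => hvnot (h (hmemS v))))
          omega
        have hagg := ih (p v) hcard
        rw [hrec v hsv, hagg]
        have hdecomp : ∑ w ∈ S v \ (S (p v) ∪ {v}), A w + ∑ w ∈ S (p v) ∪ {v}, A w
            = ∑ w ∈ S v, A w := sum_sdiff hsubU
        have hUsum : ∑ w ∈ S (p v) ∪ {v}, A w = ∑ w ∈ S (p v), A w + A v := by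
          rw [sum_union (by simp [hvnot])]
          simp
        rw [← hdecomp, hUsum]
        abel
      · rw [hsrc v hsv]
        have : ∑ w ∈ S v \ {v}, A w + ∑ w ∈ ({v} : Finset V), A w = ∑ w ∈ S v, A w :=
          sum_sdiff (singleton_subset_iff.mpr (hmemS v))
        simp only [sum_singleton] at this
        rw [← this]
        abel
  intro v
  exact key (S v).card v le_rfl
end

section
/- In a directed acyclic graph, inserting a directed edge (s, t) where t does not reach s preserves acyclicity, and after insertion the new topological window of any vertex v satisfies: W_t'(v) = W_t(v) ∪ W_t(s) if t reaches v (in the new graph), and W_t'(v) = W_t(v) otherwise. -/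
section Aux

variable {V : Type*} (E : V → V → Prop) (s t : V)

private lemma lift_mono : ∀ {a b : V}, Relation.ReflTransGen E a b →
    Relation.ReflTransGen (fun a b => E a b ∨ (a = s ∧ b = t)) a b := by
  intro a b h
  exact Relation.ReflTransGen.mono (fun x y hxy => Or.inl hxy) _ _ h

private lemma decomp (hts : ¬ Relation.ReflTransGen E t s) :
    ∀ {w v : V}, Relation.ReflTransGen (fun a b => E a b ∨ (a = s ∧ b = t)) w v →
      Relation.ReflTransGen E w v ∨
        (Relation.ReflTransGen E w s ∧ Relation.ReflTransGen E t v) := by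
  intro w v h
  induction h with
  | refl => exact Or.inl Relation.ReflTransGen.refl
  | tail hxy hstep ih =>
    rcases hstep with hE | ⟨rfl, rfl⟩
    · rcases ih with h1 | ⟨h1, h2⟩
      · exact Or.inl (h1.tail hE)
      · exact Or.inr ⟨h1, h2.tail hE⟩
    · rcases ih with h1 | ⟨h1, h2⟩
      · exact Or.inr ⟨h1, Relation.ReflTransGen.refl⟩
      · exact absurd h2 hts

end Aux

/-- Inserting an edge `(s, t)` into a DAG where `t` does not reach `s` preserves
acyclicity, and the new topological window of `v` is `W_t(v) ∪ W_t(s)` if `t` reaches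
`v` in the new graph, and `W_t(v)` otherwise. -/
theorem dag_edge_insert_window {V : Type*} [Fintype V] (E : V → V → Prop)
    (hacyc : ∀ v, ¬ Relation.TransGen E v v) (s t : V)
    (hts : ¬ Relation.ReflTransGen E t s) :
    (∀ v, ¬ Relation.TransGen (fun a b => E a b ∨ (a = s ∧ b = t)) v v) ∧
    ∀ v,
      (Relation.ReflTransGen (fun a b => E a b ∨ (a = s ∧ b = t)) t v →
        {w | Relation.ReflTransGen (fun a b => E a b ∨ (a = s ∧ b = t)) w v} =
          {w | Relation.ReflTransGen E w v} ∪ {w | Relation.ReflTransGen E w s}) ∧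
      (¬ Relation.ReflTransGen (fun a b => E a b ∨ (a = s ∧ b = t)) t v →
        {w | Relation.ReflTransGen (fun a b => E a b ∨ (a = s ∧ b = t)) w v} =
          {w | Relation.ReflTransGen E w v}) := by
  constructor
  · intro v hv
    obtain ⟨x, hvx, hxv⟩ := Relation.TransGen.head'_iff.mp hv
    rcases hvx with hE | hvx
    · rcases decomp E s t hts hxv with h1 | ⟨h1, h2⟩
      · exact hacyc v (Relation.TransGen.head' hE h1)
      · exact hts (h2.tail hE |>.trans h1)
    · obtain ⟨hv, hx⟩ := hvx
      rcases decomp E s t hts hxv with h1 | ⟨h1, h2⟩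
      · exact hts (hv ▸ hx ▸ h1)
      · exact hts (hx ▸ h1)
  · intro v
    constructor
    · intro htv
      have htvE : Relation.ReflTransGen E t v := by
        rcases decomp E s t hts htv with h1 | ⟨h1, h2⟩
        · exact h1
        · exact absurd h1 hts
      ext w
      simp only [Set.mem_setOf_eq, Set.mem_union]
      constructor
      · intro hw
        rcases decomp E s t hts hw with h1 | ⟨h1, _⟩
        · exact Or.inl h1
        · exact Or.inr h1
      · rintro (hw | hw)
        · exact lift_mono E s t hw
        · exact ((lift_mono E s t hw).tail (Or.inr ⟨rfl, rfl⟩)).trans (lift_mono E s t htvE)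
    · intro htv
      ext w
      simp only [Set.mem_setOf_eq]
      constructor
      · intro hw
        rcases decomp E s t hts hw with h1 | ⟨h1, h2⟩
        · exact h1
        · exact absurd (lift_mono E s t h2) htv
      · exact lift_mono E s t
end
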